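/- arXiv:1703.04658 — 4 statements merged into one kernel-verified Lean document; each statement's English description precedes it below -/
import Mathlib

section
/- Let G be a group with lower central series Γ_kG, and define [a,b] := a * b⁻¹ * a⁻¹ * b. For all integers a, b, c ≥ 1 and all A ∈ Γ_a G, B ∈ Γ_b G, C ∈ Γ_c G, the element [A, [B, C]] * ([[A, B], C] * [[A, C], B⁻¹])⁻¹ lies in Γ_{a+b+c+1} G; that is, [A,[B,C]] ≡ [[A,B],C] * [[A,C],B⁻¹] modulo Γ_{a+b+c+1} G. -/
/-- The bracket convention of the paper: `[a,b] = a b⁻¹ a⁻¹ b`. -/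
def br {G : Type*} [Group G] (a b : G) : G := a * b⁻¹ * a⁻¹ * b

/-!
Modulo `Γ_{a+b+c+1}` the triple commutators `α = [[A,B⁻¹],C]`, `β = [[C⁻¹,B],A]` and
`γ = [[C,A],B]` (in Mathlib's convention `⁅g,h⁆ = g h g⁻¹ h⁻¹`, so that `br g h = ⁅g,h⁻¹⁆`) are
central, so the Hall–Witt identity collapses to `α⁻¹ β γ = 1`. The three brackets of the relation
are `β⁻¹`, `α⁻¹` and `γ`: moving an inverse across a commutator or conjugating its entry changes
it only by commutators of weight at least `a+b+c+1`. The weights are controlled by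
`⁅Γ_i, Γ_j⁆ ≤ Γ_{i+j}`, which follows from the three subgroups lemma.
-/

open scoped commutatorElement

section

variable {G : Type*} [Group G]

theorem br_eq_commutatorElement (g h : G) : br g h = ⁅g, h⁻¹⁆ := by
  simp only [br, commutatorElement_def, inv_inv]

theorem map_br {H : Type*} [Group H] (f : G →* H) (g h : G) : f (br g h) = br (f g) (f h) := by
  simp only [br, map_mul, map_inv]

namespace Subgroup

theorem mul_mul_inv_eq_of_mem_center {t : G} (ht : t ∈ center G) (g : G) : g * t * g⁻¹ = t := by
  rw [mem_center_iff.mp ht g, mul_inv_cancel_right]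

theorem inv_mul_mul_eq_of_mem_center {t : G} (ht : t ∈ center G) (g : G) : g⁻¹ * t * g = t := by
  rw [mul_assoc, ← mem_center_iff.mp ht g, inv_mul_cancel_left]

theorem commutatorElement_inv_left_of_mem_center {g h : G} (hc : ⁅g, h⁆ ∈ center G) :
    ⁅g⁻¹, h⁆ = ⁅g, h⁆⁻¹ := by
  have hc' : ⁅h, g⁆ ∈ center G := commutatorElement_inv g h ▸ inv_mem hc
  rw [commutatorElement_inv_left, inv_mul_mul_eq_of_mem_center hc', commutatorElement_inv]

theorem commutatorElement_inv_right_of_mem_center {g h : G} (hc : ⁅g, h⁆ ∈ center G) :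
    ⁅g, h⁻¹⁆ = ⁅g, h⁆⁻¹ := by
  have hc' : ⁅h, g⁆ ∈ center G := commutatorElement_inv g h ▸ inv_mem hc
  rw [commutatorElement_inv_right, inv_mul_mul_eq_of_mem_center hc', commutatorElement_inv]

theorem commutatorElement_conj_left_of_commute {w y g : G} (hk : Commute w ⁅y⁻¹, g⁆)
    (hc : ⁅w, y⁆ ∈ center G) : ⁅g⁻¹ * w * g, y⁆ = ⁅w, y⁆ := by
  have hconj : ⁅g⁻¹ * w * g, y⁆ = g⁻¹ * ⁅w, y * ⁅y⁻¹, g⁆⁆ * g := by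
    simp only [commutatorElement_def]
    group
  have hmul : ⁅w, y * ⁅y⁻¹, g⁆⁆ = ⁅w, y⁆ := by
    rw [commutatorElement_mul_right_eq_mul_conj, commutatorElement_eq_one_iff_commute.mpr hk,
      mul_one, mul_inv_cancel_right]
  rw [hconj, hmul, inv_mul_mul_eq_of_mem_center hc]

theorem commute_of_commutator_eq_bot {H K : Subgroup G} (h : ⁅H, K⁆ = ⊥) {g k : G} (hg : g ∈ H)
    (hk : k ∈ K) : Commute g k :=
  commutatorElement_eq_one_iff_commute.mp <| mem_bot.mp <| h ▸ commutator_mem_commutator hg hk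

theorem br_br_eq_mul_of_commutator_le_center {X Y Z : Subgroup G}
    (hXYZ : ⁅⁅X, Y⁆, Z⁆ ≤ center G) (hZYX : ⁅⁅Z, Y⁆, X⁆ ≤ center G)
    (hZXY : ⁅⁅Z, X⁆, Y⁆ ≤ center G) (hZXYZ : ⁅⁅Z, X⁆, ⁅Y, Z⁆⁆ = ⊥) (hZXYX : ⁅⁅Z, X⁆, ⁅Y, X⁆⁆ = ⊥)
    {x y z : G} (hx : x ∈ X) (hy : y ∈ Y) (hz : z ∈ Z) :
    br x (br y z) = br (br x y) z * br (br x z) y⁻¹ := by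
  set α := ⁅⁅x, y⁻¹⁆, z⁆
  set β := ⁅⁅z⁻¹, y⁆, x⁆
  set γ := ⁅⁅z, x⁆, y⁆
  have hα : α ∈ center G :=
    hXYZ (commutator_mem_commutator (commutator_mem_commutator hx (inv_mem hy)) hz)
  have hβ : β ∈ center G :=
    hZYX (commutator_mem_commutator (commutator_mem_commutator (inv_mem hz) hy) hx)
  have hγ : γ ∈ center G := hZXY (commutator_mem_commutator (commutator_mem_commutator hz hx) hy)
  have hzx := commutator_mem_commutator hz hx
  have hγx : ⁅x⁻¹ * ⁅z, x⁆ * x, y⁆ = γ := commutatorElement_conj_left_of_commute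
    (commute_of_commutator_eq_bot hZXYX hzx (commutator_mem_commutator (inv_mem hy) hx)) hγ
  have hγz : ⁅z⁻¹ * ⁅z, x⁆ * z, y⁆ = γ := commutatorElement_conj_left_of_commute
    (commute_of_commutator_eq_bot hZXYZ hzx (commutator_mem_commutator (inv_mem hy) hz)) hγ
  have hall_witt : α⁻¹ * β * γ = 1 := by
    have h := conj_commutatorElement_left_commutatorElement_mul y x z
    rw [← commutatorElement_inv x y⁻¹, commutatorElement_inv_left_of_mem_center hα,
      commutatorElement_inv_left x z, hγx] at h
    calc α⁻¹ * β * γ = y * α⁻¹ * y⁻¹ * (z * β * z⁻¹) * (x * γ * x⁻¹) := by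
          rw [mul_mul_inv_eq_of_mem_center (inv_mem hα), mul_mul_inv_eq_of_mem_center hβ,
            mul_mul_inv_eq_of_mem_center hγ]
      _ = 1 := by simpa only [mul_assoc] using h
  have lhs : br x (br y z) = β⁻¹ := by
    rw [br_eq_commutatorElement, br_eq_commutatorElement, commutatorElement_inv,
      commutatorElement_inv]
  have rhs₁ : br (br x y) z = α⁻¹ := by
    rw [br_eq_commutatorElement, br_eq_commutatorElement,
      commutatorElement_inv_right_of_mem_center hα]
  have rhs₂ : br (br x z) y⁻¹ = γ := by
    rw [br_eq_commutatorElement, br_eq_commutatorElement, inv_inv, commutatorElement_inv_right,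
      hγz]
  rw [lhs, rhs₁, rhs₂, inv_eq_iff_mul_eq_one, ← hall_witt, mem_center_iff.mp hβ α⁻¹, mul_assoc]

theorem commutator_commutator_le_of_rotate {H₁ H₂ H₃ N : Subgroup G} [N.Normal]
    (h1 : ⁅⁅H₂, H₃⁆, H₁⁆ ≤ N) (h2 : ⁅⁅H₃, H₁⁆, H₂⁆ ≤ N) : ⁅⁅H₁, H₂⁆, H₃⁆ ≤ N := by
  have le_iff_map_eq_bot (K : Subgroup G) : K ≤ N ↔ K.map (QuotientGroup.mk' N) = ⊥ := by
    rw [map_eq_bot_iff, QuotientGroup.ker_mk']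
  simp only [le_iff_map_eq_bot, map_commutator] at h1 h2 ⊢
  exact commutator_commutator_eq_bot_of_rotate h1 h2

theorem commutator_lowerCentralSeries_le (i j : ℕ) :
    ⁅(⊤ : Subgroup G).lowerCentralSeries i, (⊤ : Subgroup G).lowerCentralSeries j⁆ ≤
      (⊤ : Subgroup G).lowerCentralSeries (i + j + 1) := by
  induction j generalizing i with
  | zero => rfl
  | succ j ih =>
    rw [lowerCentralSeries_succ, commutator_comm]
    apply commutator_commutator_le_of_rotate
    · rw [commutator_comm ⊤, ← lowerCentralSeries_succ]
      exact (ih (i + 1)).trans (lowerCentralSeries_antitone ⊤ (by omega))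
    · exact commutator_mono (ih i) le_rfl

theorem commutator_le_lowerCentralSeries_of_le {H K : Subgroup G} {i j : ℕ}
    (hH : H ≤ (⊤ : Subgroup G).lowerCentralSeries i)
    (hK : K ≤ (⊤ : Subgroup G).lowerCentralSeries j) :
    ⁅H, K⁆ ≤ (⊤ : Subgroup G).lowerCentralSeries (i + j + 1) :=
  (commutator_mono hH hK).trans (commutator_lowerCentralSeries_le i j)

theorem map_mk'_le_center {K N : Subgroup G} [N.Normal] (h : ⁅K, ⊤⁆ ≤ N) :
    K.map (QuotientGroup.mk' N) ≤ center (G ⧸ N) := by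
  rw [← commutator_top_right_eq_bot_iff_le_center,
    ← map_top_of_surjective _ (QuotientGroup.mk'_surjective N), ← map_commutator, map_eq_bot_iff,
    QuotientGroup.ker_mk']
  exact h

theorem br_br_mul_inv_mem_of_commutator_le {N X Y Z : Subgroup G} [N.Normal]
    (hXYZ : ⁅⁅⁅X, Y⁆, Z⁆, ⊤⁆ ≤ N) (hZYX : ⁅⁅⁅Z, Y⁆, X⁆, ⊤⁆ ≤ N) (hZXY : ⁅⁅⁅Z, X⁆, Y⁆, ⊤⁆ ≤ N)
    (hZXYZ : ⁅⁅Z, X⁆, ⁅Y, Z⁆⁆ ≤ N) (hZXYX : ⁅⁅Z, X⁆, ⁅Y, X⁆⁆ ≤ N)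
    {x y z : G} (hx : x ∈ X) (hy : y ∈ Y) (hz : z ∈ Z) :
    br x (br y z) * (br (br x y) z * br (br x z) y⁻¹)⁻¹ ∈ N := by
  set π := QuotientGroup.mk' N
  have map_eq_bot {K : Subgroup G} (hK : K ≤ N) : K.map π = ⊥ := by
    rwa [map_eq_bot_iff, QuotientGroup.ker_mk']
  rw [← QuotientGroup.ker_mk' N, MonoidHom.mem_ker, map_mul, map_inv, mul_inv_eq_one]
  simp only [map_mul, map_br, map_inv]
  refine br_br_eq_mul_of_commutator_le_center (X := X.map π) (Y := Y.map π) (Z := Z.map π)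
    ?_ ?_ ?_ ?_ ?_ (mem_map_of_mem π hx) (mem_map_of_mem π hy) (mem_map_of_mem π hz)
  all_goals simp only [← map_commutator]
  exacts [map_mk'_le_center hXYZ, map_mk'_le_center hZYX, map_mk'_le_center hZXY,
    map_eq_bot hZXYZ, map_eq_bot hZXYX]

end Subgroup

end

/-- The paper's `Γ_k G` is `(⊤ : Subgroup G).lowerCentralSeries (k - 1)`. -/
theorem ihx_relation_general {G : Type*} [Group G] (a b c : ℕ)
    (A B C : G) (hA : A ∈ (⊤ : Subgroup G).lowerCentralSeries (a - 1))
    (hB : B ∈ (⊤ : Subgroup G).lowerCentralSeries (b - 1)) (hC : C ∈ (⊤ : Subgroup G).lowerCentralSeries (c - 1)) :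
    br A (br B C) * (br (br A B) C * br (br A C) B⁻¹)⁻¹ ∈
      (⊤ : Subgroup G).lowerCentralSeries (a + b + c) := by
  have of_weight {H : Subgroup G} {m : ℕ} (hH : H ≤ (⊤ : Subgroup G).lowerCentralSeries m)
      (hm : a + b + c ≤ m) : H ≤ (⊤ : Subgroup G).lowerCentralSeries (a + b + c) :=
    hH.trans (Subgroup.lowerCentralSeries_antitone ⊤ hm)
  have comm_le := @Subgroup.commutator_le_lowerCentralSeries_of_le G _
  have top_le := (Subgroup.lowerCentralSeries_zero (⊤ : Subgroup G)).ge
  refine Subgroup.br_br_mul_inv_mem_of_commutator_le ?_ ?_ ?_ ?_ ?_ hA hB hC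
  · exact of_weight (comm_le (comm_le (comm_le le_rfl le_rfl) le_rfl) top_le) (by omega)
  · exact of_weight (comm_le (comm_le (comm_le le_rfl le_rfl) le_rfl) top_le) (by omega)
  · exact of_weight (comm_le (comm_le (comm_le le_rfl le_rfl) le_rfl) top_le) (by omega)
  · exact of_weight (comm_le (comm_le le_rfl le_rfl) (comm_le le_rfl le_rfl)) (by omega)
  · exact of_weight (comm_le (comm_le le_rfl le_rfl) (comm_le le_rfl le_rfl)) (by omega)

/-- IHX relation (algebraic form): for `A ∈ Γ_a G`, `B ∈ Γ_b G`, `C ∈ Γ_c G` (`a,b,c ≥ 1`),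
`[A,[B,C]] ≡ [[A,B],C] * [[A,C],B⁻¹]` modulo `Γ_{a+b+c+1} G`,
where `Γ_k G = lowerCentralSeries G (k-1)`. -/
theorem ihx_relation {G : Type*} [Group G] (a b c : ℕ) (ha : 1 ≤ a) (hb : 1 ≤ b) (hc : 1 ≤ c)
    (A B C : G) (hA : A ∈ (⊤ : Subgroup G).lowerCentralSeries (a - 1))
    (hB : B ∈ (⊤ : Subgroup G).lowerCentralSeries (b - 1)) (hC : C ∈ (⊤ : Subgroup G).lowerCentralSeries (c - 1)) :
    br A (br B C) * (br (br A B) C * br (br A C) B⁻¹)⁻¹ ∈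
      (⊤ : Subgroup G).lowerCentralSeries (a + b + c) :=
  ihx_relation_general a b c A B C hA hB hC
end

section
/- Let F be the free group on x₁, …, xₙ with Magnus expansion E : F → ℤ⟪X₁,…,Xₙ⟫ (E(xᵢ) = 1 + Xᵢ), and let Nᵢ denote the normal closure of xᵢ in F. Then for every g ∈ Nᵢ, every nonzero monomial of E(g) − 1 contains the variable Xᵢ at least once. -/
open Finset in
/-- `IsMagnusExpansion E` says that `E` assigns to each element `g` of the free group on
`n` generators the coefficients `E g w ∈ ℤ` of the non-commutative formal power series
`E(g) ∈ ℤ⟪X₁,…,Xₙ⟫` (a monomial being a word `w : List (Fin n)` in the variables), in such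
a way that `E(1) = 1`, `E` is multiplicative (Cauchy product of power series), and
`E(xᵢ) = 1 + Xᵢ`.  These properties characterize the Magnus expansion uniquely. -/
def IsMagnusExpansion {n : ℕ} (E : FreeGroup (Fin n) → List (Fin n) → ℤ) : Prop :=
  (∀ w : List (Fin n), E 1 w = if w = [] then 1 else 0) ∧
  (∀ g h : FreeGroup (Fin n), ∀ w : List (Fin n),
      E (g * h) w = ∑ k ∈ range (w.length + 1), E g (w.take k) * E h (w.drop k)) ∧
  (∀ i : Fin n, ∀ w : List (Fin n),
      E (FreeGroup.of i) w = if w = [] ∨ w = [i] then 1 else 0)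

open Finset in
/-- If `E g` looks like `E 1` on monomials avoiding `i`, then multiplying by `g` on the
left does not change such coefficients. -/
private lemma magnus_absorb {n : ℕ} (E : FreeGroup (Fin n) → List (Fin n) → ℤ)
    (hE : IsMagnusExpansion E) (i : Fin n) (g : FreeGroup (Fin n))
    (hg : ∀ w : List (Fin n), i ∉ w → E g w = if w = [] then 1 else 0)
    (h : FreeGroup (Fin n)) :
    ∀ u : List (Fin n), i ∉ u → E (g * h) u = E h u := by
  intro u hu
  obtain ⟨-, hmul, -⟩ := hE
  rw [hmul]
  rw [Finset.sum_eq_single 0]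
  · have := hg [] (by simp)
    simp at this
    simp [this]
  · intro j hj hj0
    have hsub : i ∉ u.take j := fun hi => hu (List.take_subset _ _ hi)
    rw [hg (u.take j) hsub]
    have hne : u.take j ≠ [] := by
      intro hnil
      rcases List.take_eq_nil_iff.mp hnil with h' | h'
      · exact hj0 h'
      · subst h'
        simp at hj
        exact hj0 hj
    simp [hne]
  · intro h0
    exact absurd (Finset.mem_range.mpr (Nat.succ_pos _)) h0

/-- If `g` lies in the normal closure `Nᵢ` of the generator `xᵢ`, then every nonzero
monomial of `E(g) - 1` contains the variable `Xᵢ` at least once. -/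
theorem magnus_normalClosure {n : ℕ} (E : FreeGroup (Fin n) → List (Fin n) → ℤ)
    (hE : IsMagnusExpansion E) (i : Fin n)
    (g : FreeGroup (Fin n)) (hg : g ∈ Subgroup.normalClosure {FreeGroup.of i}) :
    ∀ w : List (Fin n), i ∉ w → E g w = if w = [] then 1 else 0 := by
  obtain ⟨h1, hmul, hof⟩ := hE
  set K : Subgroup (FreeGroup (Fin n)) :=
    { carrier := {g | ∀ w : List (Fin n), i ∉ w → E g w = if w = [] then 1 else 0}
      one_mem' := fun w _ => h1 w
      mul_mem' := by
        intro a b ha hb w hw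
        rw [magnus_absorb E ⟨h1, hmul, hof⟩ i a ha b w hw]
        exact hb w hw
      inv_mem' := by
        intro a ha w hw
        have := magnus_absorb E ⟨h1, hmul, hof⟩ i a ha a⁻¹ w hw
        rw [mul_inv_cancel] at this
        rw [← this]
        exact h1 w } with hK
  haveI : K.Normal := by
    constructor
    intro a ha h w hw
    have key : ∀ u : List (Fin n), i ∉ u → E (a * h⁻¹) u = E h⁻¹ u :=
      magnus_absorb E ⟨h1, hmul, hof⟩ i a ha h⁻¹
    have : E (h * (a * h⁻¹)) w = E (h * h⁻¹) w := by
      rw [hmul, hmul]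
      apply Finset.sum_congr rfl
      intro j hj
      rw [key (w.drop j) (fun hi => hw (List.drop_subset _ _ hi))]
    rw [← mul_assoc, mul_inv_cancel] at this
    rw [this]
    exact h1 w
  have hsub : {FreeGroup.of i} ⊆ (K : Set (FreeGroup (Fin n))) := by
    intro x hx
    rw [Set.mem_singleton_iff] at hx
    subst hx
    intro w hw
    rw [hof i w]
    have : w ≠ [i] := by rintro rfl; simp at hw
    by_cases hnil : w = []
    · simp [hnil]
    · simp [hnil, this]
  exact Subgroup.normalClosure_le_normal hsub hg
end

section
/- Let F be the free group on x₁, …, xₙ with Magnus expansion E : F → ℤ⟪X₁,…,Xₙ⟫ (E(xᵢ) = 1 + Xᵢ), let Nᵢ be the normal closure of xᵢ in F, and let [Nᵢ, Nᵢ] be its commutator subgroup. Then for every g ∈ [Nᵢ, Nᵢ], every nonzero monomial of E(g) − 1 contains the variable Xᵢ at least twice. -/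
/-! Truncating a power series to the words with at most `c` letters `i` is multiplicative,
because such words are closed under taking prefixes and suffixes. So the elements whose
expansion is `1` up to that truncation form a normal subgroup `K c = (truncCon i c).mk'.ker`.
The generator `xᵢ` lies in `K 0`, hence so does `Nᵢ`. For `a, b ∈ K 0`, on words with at most
one `i` we get `E(ab) - 1 = (E a - 1) + (E b - 1)`, since every splitting of such a word leaves
one half free of `i`. This is symmetric in `a` and `b`, so the images of `K 0` in the quotient
by `K 1` commute, i.e. `[K 0, K 0] ≤ K 1`. -/

open Finset

section WordSums

variable {α R : Type*} [Semiring R]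

theorem sum_range_ite_take_eq_nil_mul (f : List α → R) (w : List α) :
    ∑ k ∈ range (w.length + 1), (if w.take k = [] then 1 else 0) * f (w.drop k) = f w := by
  rw [sum_eq_single_of_mem 0 (by simp) fun k hk hk0 => ?_]
  · simp
  have hw : w ≠ [] := by
    rintro rfl
    simp_all
  simp [hk0, hw]

theorem sum_range_mul_ite_drop_eq_nil (f : List α → R) (w : List α) :
    ∑ k ∈ range (w.length + 1), f (w.take k) * (if w.drop k = [] then 1 else 0) = f w := by
  rw [sum_eq_single_of_mem w.length (by simp) fun k hk hkw => ?_]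
  · simp
  have : k < w.length := by
    rw [mem_range] at hk
    omega
  simp [this]

end WordSums

/-- `E` is a multiplicative map from `G` to the non-commutative power series over `α`,
a series being given by its coefficients on words. -/
structure IsSeriesHom {G α : Type*} [Monoid G] (E : G → List α → ℤ) : Prop where
  apply_one : ∀ w : List α, E 1 w = if w = [] then 1 else 0
  apply_mul : ∀ (g h : G) (w : List α),
    E (g * h) w = ∑ k ∈ range (w.length + 1), E g (w.take k) * E h (w.drop k)

namespace IsSeriesHom

variable {G α : Type*} [Group G] [DecidableEq α] {E : G → List α → ℤ}

def truncCon (hE : IsSeriesHom E) (i : α) (c : ℕ) : Con G where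
  r g h := ∀ w : List α, w.count i ≤ c → E g w = E h w
  iseqv := ⟨fun _ _ _ => rfl, fun hgh w hw => (hgh w hw).symm,
    fun hgh hhk w hw => (hgh w hw).trans (hhk w hw)⟩
  mul' := by
    intro g g' h h' hg hh w hw
    rw [hE.apply_mul, hE.apply_mul]
    refine sum_congr rfl fun k _ => ?_
    rw [hg _ (((w.take_sublist k).count_le i).trans hw),
      hh _ (((w.drop_sublist k).count_le i).trans hw)]

theorem mem_ker_truncCon (hE : IsSeriesHom E) {i : α} {c : ℕ} {g : G} :
    g ∈ (hE.truncCon i c).mk'.ker ↔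
      ∀ w : List α, w.count i ≤ c → E g w = if w = [] then 1 else 0 := by
  rw [MonoidHom.mem_ker, Con.coe_mk', ← Con.coe_one, Con.eq]
  simp only [truncCon, Con.rel_mk, hE.apply_one]

theorem apply_mul_of_mem_ker_truncCon_zero (hE : IsSeriesHom E) {i : α} {a b : G}
    (ha : a ∈ (hE.truncCon i 0).mk'.ker) (hb : b ∈ (hE.truncCon i 0).mk'.ker)
    {w : List α} (hw : w.count i ≤ 1) :
    E (a * b) w = E a w + E b w - if w = [] then 1 else 0 := by
  rw [hE.mem_ker_truncCon] at ha hb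
  have hsplit : ∀ k, E a (w.take k) * E b (w.drop k) =
      (if w.take k = [] then 1 else 0) * E b (w.drop k) +
        E a (w.take k) * (if w.drop k = [] then 1 else 0) -
        (if w.take k = [] then 1 else 0) * (if w.drop k = [] then 1 else 0) := by
    intro k
    have hcount : (w.take k).count i + (w.drop k).count i = w.count i := by
      rw [← List.count_append, List.take_append_drop]
    rcases Nat.eq_zero_or_pos ((w.take k).count i) with htake | htake
    · rw [ha _ htake.le]
      ring
    · rw [hb _ (by omega)]
      ring
  rw [hE.apply_mul, sum_congr rfl fun k _ => hsplit k, sum_sub_distrib, sum_add_distrib,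
    sum_range_ite_take_eq_nil_mul, sum_range_mul_ite_drop_eq_nil,
    sum_range_ite_take_eq_nil_mul (fun v => if v = [] then 1 else 0), add_comm (E b w)]

theorem commutator_ker_truncCon_zero_le (hE : IsSeriesHom E) (i : α) :
    ⁅(hE.truncCon i 0).mk'.ker, (hE.truncCon i 0).mk'.ker⁆ ≤ (hE.truncCon i 1).mk'.ker := by
  rw [Subgroup.commutator_le]
  intro a ha b hb
  rw [MonoidHom.mem_ker, map_commutatorElement, commutatorElement_eq_one_iff_commute,
    Commute, SemiconjBy, ← map_mul, ← map_mul, Con.coe_mk', Con.eq]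
  intro w hw
  rw [hE.apply_mul_of_mem_ker_truncCon_zero ha hb hw,
    hE.apply_mul_of_mem_ker_truncCon_zero hb ha hw, add_comm (E a w)]

end IsSeriesHom

theorem IsMagnusExpansion.isSeriesHom {n : ℕ} {E : FreeGroup (Fin n) → List (Fin n) → ℤ}
    (hE : IsMagnusExpansion E) : IsSeriesHom E :=
  ⟨hE.1, hE.2.1⟩

theorem IsMagnusExpansion.of_mem_ker_truncCon_zero {n : ℕ}
    {E : FreeGroup (Fin n) → List (Fin n) → ℤ} (hE : IsMagnusExpansion E) (i : Fin n) :
    FreeGroup.of i ∈ (hE.isSeriesHom.truncCon i 0).mk'.ker := by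
  rw [IsSeriesHom.mem_ker_truncCon]
  intro w hw
  have hwi : w ≠ [i] := by
    rintro rfl
    simp at hw
  simp [hE.2.2 i w, hwi]

/-- If `g` lies in the commutator subgroup `[Nᵢ, Nᵢ]` of the normal closure of the
generator `xᵢ`, then every nonzero monomial of `E(g) - 1` contains `Xᵢ` at least twice. -/
theorem magnus_commutator_normalClosure {n : ℕ} (E : FreeGroup (Fin n) → List (Fin n) → ℤ)
    (hE : IsMagnusExpansion E) (i : Fin n)
    (g : FreeGroup (Fin n))
    (hg : g ∈ ⁅Subgroup.normalClosure {FreeGroup.of i},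
               Subgroup.normalClosure {FreeGroup.of i}⁆) :
    ∀ w : List (Fin n), w.count i ≤ 1 → E g w = if w = [] then 1 else 0 := by
  have hN : Subgroup.normalClosure {FreeGroup.of i} ≤ (hE.isSeriesHom.truncCon i 0).mk'.ker :=
    Subgroup.normalClosure_le_normal (Set.singleton_subset_iff.2 (hE.of_mem_ker_truncCon_zero i))
  exact hE.isSeriesHom.mem_ker_truncCon.1
    (hE.isSeriesHom.commutator_ker_truncCon_zero_le i (Subgroup.commutator_mono hN hN hg))
end

section
/- Let F = F(l, r) be the free group on two generators, and let ∂/∂l and ∂/∂r denote the Fox free derivatives ℤF → ℤF, determined by ∂l/∂l = 1, ∂r/∂l = 0, ∂(uv)/∂l = ∂u/∂l + u·(∂v/∂l), and ∂(u⁻¹)/∂l = −u⁻¹·(∂u/∂l) (similarly for ∂/∂r). Let φ : ℤF → ℤ[t, t⁻¹] be the ring homomorphism induced by sending both l and r to t. Define R₁ = l and R_{j+1} = [R_j, r⁻¹] where [a,b] = a b⁻¹ a⁻¹ b. Then for all k ≥ 1: φ(∂R_k/∂l) = (1 − t)^{k−1} and, for k ≥ 2, φ(∂R_k/∂r) = −(1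 − t)^{k−1}. -/
open LaurentPolynomial

/-- The free group on two generators `l` and `r`. -/
abbrev F2 := FreeGroup (Fin 2)

/-- The generator `l`. -/
def l : F2 := FreeGroup.of 0

/-- The generator `r`. -/
def r : F2 := FreeGroup.of 1

/-- The ring map `φ : ℤF → ℤ[t,t⁻¹]` sending both generators to `t`, restricted to group
elements: `φ g = t^(total exponent sum of g)`. -/
noncomputable def phi (g : F2) : LaurentPolynomial ℤ :=
  T (Multiplicative.toAdd ((FreeGroup.lift fun _ => Multiplicative.ofAdd (1 : ℤ)) g))

/-- `IsFoxDerivative x d` says that `d : F2 → ℤ[t,t⁻¹]` is the composite `φ ∘ (∂/∂x)` of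
the Fox free derivative with respect to the generator `x` with the map `φ`.  It is
characterized by the Leibniz rule `d(uv) = d(u) + φ(u)·d(v)` together with its values
`d(l)` and `d(r)` on the generators (`∂x/∂x = 1`, `∂y/∂x = 0` for `y ≠ x`). -/
structure IsFoxDerivative (x : F2) (d : F2 → LaurentPolynomial ℤ) : Prop where
  leibniz : ∀ u v : F2, d (u * v) = d u + phi u * d v
  gen_self : d x = 1
  gen_other : ∀ y : Fin 2, FreeGroup.of y ≠ x → d (FreeGroup.of y) = 0

/-- The iterated bracket `R_k = [[…[[l,r⁻¹],r⁻¹],…],r⁻¹]` (`R₁ = l`). -/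
def R : ℕ → F2
  | 0 => 1
  | 1 => l
  | j + 1 => br (R j) r⁻¹

lemma phi_mul (u v : F2) : phi (u*v) = phi u * phi v := by
  unfold phi; rw [map_mul, toAdd_mul, T_add]
lemma phi_inv_mul (u : F2) : phi u⁻¹ * phi u = 1 := by
  unfold phi; rw [map_inv, toAdd_inv, ← T_add, neg_add_cancel, T_zero]
lemma phi_one : phi 1 = 1 := by unfold phi; rw [map_one, toAdd_one, T_zero]
lemma phi_l : phi l = T 1 := by unfold phi l; rw [FreeGroup.lift_apply_of, toAdd_ofAdd]
lemma phi_r : phi r = T 1 := by unfold phi r; rw [FreeGroup.lift_apply_of, toAdd_ofAdd]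
lemma phi_r_inv : phi r⁻¹ = T (-1) := by
  unfold phi r; rw [map_inv, toAdd_inv, FreeGroup.lift_apply_of, toAdd_ofAdd]

lemma d_one {x d} (h : IsFoxDerivative x d) : d 1 = 0 := by
  have := h.leibniz 1 1
  rw [mul_one, phi_one, one_mul] at this
  exact (left_eq_add.mp this)

lemma d_inv {x d} (h : IsFoxDerivative x d) (u : F2) : d u⁻¹ = -(phi u⁻¹ * d u) := by
  have := h.leibniz u⁻¹ u
  rw [inv_mul_cancel, d_one h] at this
  linear_combination -this

lemma dl_r {d} (h : IsFoxDerivative l d) : d r = 0 := by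
  apply h.gen_other 1; unfold l; intro hc
  exact absurd (FreeGroup.of_injective hc) (by decide)
lemma dr_l {d} (h : IsFoxDerivative r d) : d l = 0 := by
  apply h.gen_other 0; unfold r; intro hc
  exact absurd (FreeGroup.of_injective hc) (by decide)

lemma d_br {x d} (h : IsFoxDerivative x d) (a : F2) :
    d (br a r⁻¹) = (1 - T 1) * d a + (phi a - 1) * d r := by
  have e1 : br a r⁻¹ = a * r * a⁻¹ * r⁻¹ := by unfold br; rw [inv_inv]
  rw [e1, h.leibniz, h.leibniz, h.leibniz, d_inv h a, d_inv h r, phi_mul, phi_mul, phi_mul,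
    phi_r, phi_r_inv]
  have h1 := phi_inv_mul a
  have h2 : (T (-1) : LaurentPolynomial ℤ) * T 1 = 1 := by rw [← T_add]; norm_num
  linear_combination (-(T 1 * d a) - T 1 * T (-1) * d r) * h1 + (- d r) * h2

lemma phi_br (a b : F2) : phi (br a b) = 1 := by
  unfold br
  rw [phi_mul, phi_mul, phi_mul]
  linear_combination (phi b⁻¹ * phi b) * phi_inv_mul a + phi_inv_mul b

lemma R_succ (k : ℕ) (hk : 1 ≤ k) : R (k+1) = br (R k) r⁻¹ := by
  match k, hk with
  | k+1, _ => rfl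

lemma phi_R (k : ℕ) (hk : 2 ≤ k) : phi (R k) = 1 := by
  match k, hk with
  | k+2, _ => exact phi_br _ _


/-- Fox derivatives of the iterated bracket `R_k`:
`φ(∂R_k/∂l) = (1-t)^{k-1}` for `k ≥ 1`, and `φ(∂R_k/∂r) = -(1-t)^{k-1}` for `k ≥ 2`. -/
theorem fox_derivatives_of_R (dl dr : F2 → LaurentPolynomial ℤ)
    (hdl : IsFoxDerivative l dl) (hdr : IsFoxDerivative r dr) :
    (∀ k : ℕ, 1 ≤ k → dl (R k) = (1 - T 1) ^ (k - 1)) ∧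
    (∀ k : ℕ, 2 ≤ k → dr (R k) = -(1 - T 1) ^ (k - 1)) := by
  constructor
  · intro k hk
    induction k, hk using Nat.le_induction with
    | base => rw [show R 1 = l from rfl, hdl.gen_self]; simp
    | succ k hk ih =>
      rw [R_succ k hk, d_br hdl, ih, dl_r hdl,
        show k + 1 - 1 = (k-1) + 1 from by omega, pow_succ]
      ring
  · intro k hk
    induction k, hk using Nat.le_induction with
    | base =>
      rw [show R 2 = br (R 1) r⁻¹ from rfl, d_br hdr, show R 1 = l from rfl,
        dr_l hdr, hdr.gen_self, phi_l]
      norm_num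
    | succ k hk ih =>
      rw [R_succ k (by omega), d_br hdr, ih, phi_R k hk, hdr.gen_self,
        show k + 1 - 1 = (k-1) + 1 from by omega, pow_succ]
      ring
end
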